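/- arXiv:2009.04591 — 3 statements merged into one kernel-verified Lean document; each statement's English description precedes it below -/
import Mathlib

section
/- (Convexity of quadratic loss plus SCAD penalty) Let λ > 0, γ > 2, b ∈ ℝ^p, and let Ω be a symmetric p×p matrix whose minimum eigenvalue c_* satisfies c_* > 1/(γ−1). Then the function β ↦ (1/2)(β − b)ᵀΩ(β − b) + Σ_{j=1}^p p_λ(|β_j|) is convex on ℝ^p, despite the nonconvexity of the SCAD penalty. -/
noncomputable section

open Filter MeasureTheory ProbabilityTheory Matrix
open scoped BigOperators ENNReal

/-- The SCAD penalty `p_λ` with tuning parameters `lam = λ > 0`, `gam = γ > 2`. -/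
def scad (lam gam t : ℝ) : ℝ :=
  if |t| ≤ lam then lam * |t|
  else if |t| ≤ gam * lam then -((|t| ^ 2 - 2 * gam * lam * |t| + lam ^ 2) / (2 * (gam - 1)))
  else (gam + 1) * lam ^ 2 / 2

/-- The derivative of the SCAD penalty on `(0, ∞)`:
`p'_λ(t) = λ·[1{t ≤ λ} + ((γλ − t)₊/((γ−1)λ))·1{t > λ}]`. -/
def scadDeriv (lam gam t : ℝ) : ℝ :=
  lam * ((if t ≤ lam then (1 : ℝ) else 0) +
    max (gam * lam - t) 0 / ((gam - 1) * lam) * (if lam < t then (1 : ℝ) else 0))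

/-- The second derivative of the SCAD penalty on `(0, ∞)` (away from the knots). -/
def scadDeriv2 (lam gam t : ℝ) : ℝ :=
  if lam < t ∧ t ≤ gam * lam then -(1 / (gam - 1)) else 0

/-!
The SCAD penalty splits as `p_λ(|t|) = λ|t| + ((|t| - γλ)₊² - (|t| - λ)₊²) / (2(γ-1))`,
whose only concave part is `-(|t| - λ)₊² / (2(γ-1))`. Borrowing `(β_j - b_j)² / (2(γ-1))`
from the loss in each coordinate makes it convex, since `(t - s)² - (|t| - λ)₊²` is twice
the Huber function plus an affine function. What is left of the loss is
`½ (β - b)ᵀ (Ω - I/(γ-1)) (β - b)`, convex because the eigenvalue bound makes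
`Ω - I/(γ-1)` positive semidefinite.
-/

open Set

theorem convexOn_sum {𝕜 E β ι : Type*} [Semiring 𝕜] [PartialOrder 𝕜] [AddCommMonoid E]
    [AddCommMonoid β] [PartialOrder β] [IsOrderedAddMonoid β] [SMul 𝕜 E] [Module 𝕜 β]
    {s : Set E} (hs : Convex 𝕜 s) (t : Finset ι) {f : ι → E → β}
    (hf : ∀ i ∈ t, ConvexOn 𝕜 s (f i)) : ConvexOn 𝕜 s (fun x => ∑ i ∈ t, f i x) := by
  classical
  induction t using Finset.induction_on with
  | empty => exact convexOn_const 0 hs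
  | insert i t hi ih =>
    simp only [Finset.sum_insert hi]
    exact (hf i (t.mem_insert_self i)).add (ih fun j hj => hf j (Finset.mem_insert_of_mem hj))

theorem convexOn_univ_abs : ConvexOn ℝ univ (fun t : ℝ => |t|) :=
  convexOn_univ_norm.congr fun _ _ => rfl

theorem Matrix.IsHermitian.posSemidef_sub_smul_one {n : Type*} [Fintype n] [DecidableEq n]
    {A : Matrix n n ℝ} (hA : A.IsHermitian) {c : ℝ} (hc : ∀ i, c ≤ hA.eigenvalues i) :
    (A - c • 1).PosSemidef := by
  refine posSemidef_iff_isHermitian_and_spectrum_nonneg.2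
    ⟨hA.sub (isHermitian_one.smul (IsSelfAdjoint.all c)), ?_⟩
  rw [← Algebra.algebraMap_eq_smul_one, ← spectrum.sub_singleton_eq,
    hA.spectrum_real_eq_range_eigenvalues]
  rintro _ ⟨_, ⟨i, rfl⟩, _, rfl, rfl⟩
  exact sub_nonneg.2 (hc i)

theorem Matrix.PosSemidef.convexOn_dotProduct_mulVec {n : Type*} [Fintype n]
    {A : Matrix n n ℝ} (hA : A.PosSemidef) : ConvexOn ℝ univ (fun x => x ⬝ᵥ A *ᵥ x) := by
  refine ⟨convex_univ, fun x _ y _ a b ha hb hab => ?_⟩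
  have hxy := hA.dotProduct_mulVec_nonneg (x - y)
  simp only [star_trivial, mulVec_sub, dotProduct_sub, sub_dotProduct] at hxy
  simp only [smul_eq_mul, mulVec_add, mulVec_smul, dotProduct_add, add_dotProduct,
    dotProduct_smul, smul_dotProduct]
  obtain rfl : b = 1 - a := by linarith
  -- the Jensen gap equals `a (1 - a) (x - y)ᵀ A (x - y)`
  linear_combination mul_nonneg (mul_nonneg ha hb) hxy

theorem hasDerivAt_max_sub_sq (a x : ℝ) :
    HasDerivAt (fun y => max (y - a) 0 ^ 2) (2 * max (x - a) 0) x := by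
  refine hasDerivAt_of_hasDerivAt_of_ne' (f := fun y => max (y - a) 0 ^ 2)
    (g := fun y => 2 * max (y - a) 0) (x := a) (fun y hy => ?_) (by fun_prop) (by fun_prop) x
  rcases hy.lt_or_gt with hy | hy
  · have hloc : (fun z => max (z - a) 0 ^ 2) =ᶠ[nhds y] fun _ => 0 :=
      eventually_of_mem (Iio_mem_nhds hy) fun z (hz : z < a) => by simp [hz.le]
    simpa [hy.le] using (hasDerivAt_const y (0 : ℝ)).congr_of_eventuallyEq hloc
  · have hloc : (fun z => max (z - a) 0 ^ 2) =ᶠ[nhds y] fun z => (z - a) ^ 2 :=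
      eventually_of_mem (Ioi_mem_nhds hy) fun z (hz : a < z) => by simp [hz.le]
    simpa [hy.le] using (((hasDerivAt_id y).sub_const a).pow 2).congr_of_eventuallyEq hloc

theorem max_abs_sub_sq_eq {a : ℝ} (ha : 0 ≤ a) (t : ℝ) :
    max (|t| - a) 0 ^ 2 = max (t - a) 0 ^ 2 + max (-t - a) 0 ^ 2 := by
  rcases le_total 0 t with ht | ht
  · rw [abs_of_nonneg ht, max_eq_right (a := -t - a) (by linarith)]; ring
  · rw [abs_of_nonpos ht, max_eq_right (a := t - a) (by linarith)]; ring

theorem convexOn_sub_sq_sub_max_abs_sub_sq {a : ℝ} (ha : 0 ≤ a) (s : ℝ) :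
    ConvexOn ℝ univ (fun t => (t - s) ^ 2 - max (|t| - a) 0 ^ 2) := by
  simp only [max_abs_sub_sq_eq ha]
  have hf : ∀ t, HasDerivAt (fun t => (t - s) ^ 2 - (max (t - a) 0 ^ 2 + max (-t - a) 0 ^ 2))
      (2 * (t - s - max (t - a) 0 + max (-t - a) 0)) t := fun t => by
    refine ((((hasDerivAt_id t).sub_const s).pow 2).sub ((hasDerivAt_max_sub_sq a t).add
      ((hasDerivAt_max_sub_sq a (-t)).comp t (hasDerivAt_neg t)))).congr_deriv ?_
    simp only [id, Nat.cast_ofNat]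
    ring
  -- `t - max (t - a) 0 + max (-t - a) 0` is `t` clamped to `[-a, a]`
  have hmono : Monotone fun t => 2 * (t - s - max (t - a) 0 + max (-t - a) 0) := by
    intro x y hxy
    simp only [max_def]
    split_ifs <;> linarith
  refine Monotone.convexOn_univ_of_deriv (fun t => (hf t).differentiableAt) ?_
  rwa [funext fun t => (hf t).deriv]

theorem convexOn_max_abs_sub_sq (a : ℝ) : ConvexOn ℝ univ (fun t : ℝ => max (|t| - a) 0 ^ 2) :=
  ((convexOn_univ_abs.add_const (-a)).sup
    (convexOn_const 0 convex_univ)).pow (fun _ _ => le_max_right _ _) 2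

theorem scad_abs_eq {lam gam : ℝ} (hlam : 0 ≤ lam) (hgam : 1 < gam) (t : ℝ) :
    scad lam gam |t| =
      lam * |t| + (max (|t| - gam * lam) 0 ^ 2 - max (|t| - lam) 0 ^ 2) / (2 * (gam - 1)) := by
  have hgam1 : gam - 1 ≠ 0 := by linarith
  have hlam_le : lam ≤ gam * lam := by nlinarith
  rw [scad, abs_abs]
  split_ifs with h₁ h₂
  · rw [max_eq_right (a := |t| - gam * lam) (by linarith),
      max_eq_right (a := |t| - lam) (by linarith)]
    ring
  · rw [max_eq_right (a := |t| - gam * lam) (by linarith),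
      max_eq_left (a := |t| - lam) (by linarith)]
    field_simp
    ring
  · rw [max_eq_left (a := |t| - gam * lam) (by linarith),
      max_eq_left (a := |t| - lam) (by linarith)]
    field_simp
    ring

theorem convexOn_scad_abs_add_sq {lam gam : ℝ} (hlam : 0 ≤ lam) (hgam : 1 < gam) (s : ℝ) :
    ConvexOn ℝ univ (fun t => scad lam gam |t| + (t - s) ^ 2 / (2 * (gam - 1))) := by
  have hc : 0 ≤ 1 / (2 * (gam - 1)) := by
    have : 0 < gam - 1 := by linarith
    positivity
  have := (convexOn_univ_abs.smul hlam).add (((convexOn_sub_sq_sub_max_abs_sub_sq hlam s).add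
    (convexOn_max_abs_sub_sq (gam * lam))).smul hc)
  refine this.congr fun t _ => ?_
  simp only [Pi.add_apply, smul_eq_mul, scad_abs_eq hlam hgam]
  ring

/-- **Convexity of quadratic loss plus SCAD penalty.** Let `λ > 0`, `γ > 2`, `b ∈ ℝ^p`, and let
`Ω` be a symmetric `p×p` matrix whose eigenvalues all exceed `1/(γ−1)` (i.e. its minimum
eigenvalue `c_*` satisfies `c_* > 1/(γ−1)`). Then
`β ↦ (1/2)(β − b)ᵀΩ(β − b) + Σ_j p_λ(|β_j|)` is convex on `ℝ^p`. -/
theorem scad_quadratic_convex (lam gam : ℝ) (hlam : 0 < lam) (hgam : 2 < gam)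
    (p : ℕ) (b : Fin p → ℝ) (Om : Matrix (Fin p) (Fin p) ℝ)
    (hherm : Om.IsHermitian)
    (heig : ∀ i, 1 / (gam - 1) < hherm.eigenvalues i) :
    ConvexOn ℝ Set.univ (fun beta : Fin p → ℝ =>
      (1 / 2) * ((beta - b) ⬝ᵥ (Om *ᵥ (beta - b))) + ∑ j, scad lam gam |beta j|) := by
  have hgam1 : 1 < gam := by linarith
  have hquad : ConvexOn ℝ univ fun beta : Fin p → ℝ =>
      1 / 2 * ((beta - b) ⬝ᵥ (Om - (1 / (gam - 1)) • 1) *ᵥ (beta - b)) := by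
    have := ((hherm.posSemidef_sub_smul_one fun i => (heig i).le).convexOn_dotProduct_mulVec
      |>.translate_right (-b)).smul (c := (1 / 2 : ℝ)) (by norm_num)
    exact this.congr fun beta _ => by simp [sub_eq_neg_add]
  have hsep : ConvexOn ℝ univ fun beta : Fin p → ℝ =>
      ∑ j, (scad lam gam |beta j| + (beta j - b j) ^ 2 / (2 * (gam - 1))) :=
    convexOn_sum convex_univ _ fun j _ =>
      (convexOn_scad_abs_add_sq hlam.le hgam1 (b j)).comp_linearMap
        (LinearMap.proj (R := ℝ) (φ := fun _ : Fin p => ℝ) j)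
  refine (hquad.add hsep).congr fun beta _ => ?_
  have hsq : ∑ j, (beta j - b j) ^ 2 / (2 * (gam - 1)) =
      (beta - b) ⬝ᵥ (beta - b) / (2 * (gam - 1)) := by
    simp only [dotProduct, Finset.sum_div, Pi.sub_apply, sq]
  simp only [Pi.add_apply, Finset.sum_add_distrib, hsq, sub_mulVec, smul_mulVec, one_mulVec,
    dotProduct_sub (beta - b) (Om *ᵥ (beta - b)), dotProduct_smul, smul_eq_mul]
  field_simp
  ring
end
end

section
/- (SCAD univariate thresholding rule) Let λ > 0, γ > 2 and z ∈ ℝ. The function β ↦ (1/2)(z − β)² + p_λ(|β|) attains its global minimum over ℝ at β̂ given by: β̂ = sign(z)(|z| − λ)₊ if |z| ≤ 2λ; β̂ = ((γ−1)z − sign(z)γλ)/(γ−2) if 2λ < |z| ≤ γλ; and β̂ = z if |z| > γλ, where (a)₊ = max(a, 0). -/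
/-!
The objective is invariant under `(z, β) ↦ (-z, -β)`, and for `z ≥ 0` replacing `β` by `|β|`
does not increase it, so it suffices to take `z ≥ 0` and compare with `β ≥ 0`. There the SCAD
penalty dominates its middle quadratic piece and agrees with it on `[λ, γλ]`, so the objective
dominates the strictly convex quadratic `½(z - β)² + scadMid β`, whose minimiser
`((γ - 1)z - γλ)/(γ - 2)` lies in `[λ, γλ]` exactly when `2λ ≤ z ≤ γλ`; in that regime this
settles the claim. For `z ≤ 2λ` the quadratic is increasing on `[λ, ∞)`, which reduces the
comparison to `β ≤ λ`, where the objective is the lasso one and soft thresholding is optimal.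
For `z > γλ` it is decreasing on `[0, γλ]`, so the objective is at least `(γ + 1)λ²/2`, its value
at `β = z`.
-/

noncomputable section

open Filter MeasureTheory ProbabilityTheory Matrix
open scoped BigOperators ENNReal

/-- The SCAD univariate thresholding rule. -/
def scadThresh (lam gam z : ℝ) : ℝ :=
  if |z| ≤ 2 * lam then Real.sign z * max (|z| - lam) 0
  else if |z| ≤ gam * lam then ((gam - 1) * z - Real.sign z * (gam * lam)) / (gam - 2)
  else z

def scadMid (lam gam t : ℝ) : ℝ :=
  -((t ^ 2 - 2 * gam * lam * t + lam ^ 2) / (2 * (gam - 1)))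

def scadMidArgmin (lam gam z : ℝ) : ℝ :=
  ((gam - 1) * z - gam * lam) / (gam - 2)

def scadObjective (lam gam z b : ℝ) : ℝ :=
  1 / 2 * (z - b) ^ 2 + scad lam gam |b|

section Penalty

variable {lam gam t : ℝ}

lemma scad_of_le (ht : 0 ≤ t) (h : t ≤ lam) : scad lam gam t = lam * t := by
  rw [scad, abs_of_nonneg ht, if_pos h]

lemma scad_of_mul_lt (hgam : 1 ≤ gam) (hlam : 0 ≤ lam) (h : gam * lam < t) :
    scad lam gam t = (gam + 1) * lam ^ 2 / 2 := by
  have hlt : lam < t := by nlinarith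
  rw [scad, abs_of_nonneg (by linarith), if_neg hlt.not_ge, if_neg h.not_ge]

lemma scadMid_self (hgam : 1 < gam) : scadMid lam gam lam = lam * lam := by
  have : gam - 1 ≠ 0 := by linarith
  rw [scadMid]; field_simp; ring

lemma scadMid_mul_self (hgam : 1 < gam) : scadMid lam gam (gam * lam) = (gam + 1) * lam ^ 2 / 2 := by
  have : gam - 1 ≠ 0 := by linarith
  rw [scadMid]; field_simp; ring

lemma scad_eq_scadMid (hgam : 1 < gam) (hlam : 0 ≤ lam) (h₁ : lam ≤ t) (h₂ : t ≤ gam * lam) :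
    scad lam gam t = scadMid lam gam t := by
  rw [scad, abs_of_nonneg (hlam.trans h₁)]
  rcases h₁.eq_or_lt with rfl | hlt
  · rw [if_pos le_rfl, scadMid_self hgam]
  · rw [if_neg hlt.not_ge, if_pos h₂, scadMid]

lemma scadMid_abs_le_scad (hgam : 1 < gam) (t : ℝ) : scadMid lam gam |t| ≤ scad lam gam t := by
  have hg : 0 < 2 * (gam - 1) := by linarith
  have : gam - 1 ≠ 0 := by linarith
  rw [scad]
  split_ifs
  · have : lam * |t| - scadMid lam gam |t| = (|t| - lam) ^ 2 / (2 * (gam - 1)) := by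
      rw [scadMid]; field_simp; ring
    linarith [div_nonneg (sq_nonneg (|t| - lam)) hg.le]
  · rfl
  · have : (gam + 1) * lam ^ 2 / 2 - scadMid lam gam |t| = (|t| - gam * lam) ^ 2 / (2 * (gam - 1)) := by
      rw [scadMid]; field_simp; ring
    linarith [div_nonneg (sq_nonneg (|t| - gam * lam)) hg.le]

end Penalty

section Quadratic

variable {lam gam z b c : ℝ}

lemma scadMid_quadratic_sub (hgam : 2 < gam) :
    (1 / 2 * (z - b) ^ 2 + scadMid lam gam b) - (1 / 2 * (z - c) ^ 2 + scadMid lam gam c) =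
      (gam - 2) / (2 * (gam - 1)) *
        ((b - scadMidArgmin lam gam z) ^ 2 - (c - scadMidArgmin lam gam z) ^ 2) := by
  have : gam - 1 ≠ 0 := by linarith
  have : gam - 2 ≠ 0 := by linarith
  rw [scadMid, scadMid, scadMidArgmin]; field_simp; ring

lemma scadMid_quadratic_le (hgam : 2 < gam)
    (h : (c - scadMidArgmin lam gam z) ^ 2 ≤ (b - scadMidArgmin lam gam z) ^ 2) :
    1 / 2 * (z - c) ^ 2 + scadMid lam gam c ≤ 1 / 2 * (z - b) ^ 2 + scadMid lam gam b := by
  have hcoef : 0 ≤ (gam - 2) / (2 * (gam - 1)) := div_nonneg (by linarith) (by linarith)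
  have := scadMid_quadratic_sub (lam := lam) (z := z) (b := b) (c := c) hgam
  nlinarith [mul_nonneg hcoef (sub_nonneg.mpr h)]

lemma softThreshold_le (hb : 0 ≤ b) :
    1 / 2 * (z - max (z - lam) 0) ^ 2 + lam * max (z - lam) 0 ≤ 1 / 2 * (z - b) ^ 2 + lam * b := by
  rcases le_total z lam with h | h
  · rw [max_eq_right (by linarith)]
    nlinarith [mul_nonneg hb (sub_nonneg.mpr h)]
  · rw [max_eq_left (by linarith)]
    nlinarith [sq_nonneg (z - b - lam)]

end Quadratic

section Objective

variable {lam gam z b : ℝ}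

lemma scadObjective_of_nonneg (hb : 0 ≤ b) :
    scadObjective lam gam z b = 1 / 2 * (z - b) ^ 2 + scad lam gam b := by
  rw [scadObjective, abs_of_nonneg hb]

lemma scadObjective_neg (lam gam z b : ℝ) :
    scadObjective lam gam (-z) (-b) = scadObjective lam gam z b := by
  rw [scadObjective, scadObjective, abs_neg]; ring

lemma scadObjective_abs_le (hz : 0 ≤ z) (b : ℝ) :
    scadObjective lam gam z |b| ≤ scadObjective lam gam z b := by
  have : (z - |b|) ^ 2 ≤ (z - b) ^ 2 := by
    simpa [abs_of_nonneg hz] using sq_le_sq.mpr (abs_abs_sub_abs_le_abs_sub z b)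
  rw [scadObjective, scadObjective, abs_abs]
  linarith

lemma scadMid_quadratic_le_scadObjective (hgam : 1 < gam) (hb : 0 ≤ b) :
    1 / 2 * (z - b) ^ 2 + scadMid lam gam b ≤ scadObjective lam gam z b := by
  have := scadMid_abs_le_scad (lam := lam) hgam b
  rw [abs_of_nonneg hb] at this
  rw [scadObjective_of_nonneg hb]
  linarith

lemma scadObjective_softThreshold_le (hgam : 2 < gam) (hlam : 0 ≤ lam) (hz : z ≤ 2 * lam)
    (hb : 0 ≤ b) : scadObjective lam gam z (max (z - lam) 0) ≤ scadObjective lam gam z b := by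
  have hs : max (z - lam) 0 ≤ lam := max_le (by linarith) hlam
  rw [scadObjective_of_nonneg (le_max_right _ _), scad_of_le (le_max_right _ _) hs]
  rcases le_total b lam with hbl | hbl
  · rw [scadObjective_of_nonneg hb, scad_of_le hb hbl]
    exact softThreshold_le hb
  · have hm : scadMidArgmin lam gam z ≤ lam := by
      rw [scadMidArgmin, div_le_iff₀ (by linarith)]; nlinarith
    calc _ ≤ 1 / 2 * (z - lam) ^ 2 + lam * lam := softThreshold_le hlam
      _ = 1 / 2 * (z - lam) ^ 2 + scadMid lam gam lam := by rw [scadMid_self (by linarith)]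
      _ ≤ 1 / 2 * (z - b) ^ 2 + scadMid lam gam b := scadMid_quadratic_le hgam (by nlinarith)
      _ ≤ _ := scadMid_quadratic_le_scadObjective (by linarith) hb

lemma scadObjective_scadMidArgmin_le (hgam : 2 < gam) (h₁ : 2 * lam ≤ z) (h₂ : z ≤ gam * lam)
    (hb : 0 ≤ b) :
    scadObjective lam gam z (scadMidArgmin lam gam z) ≤ scadObjective lam gam z b := by
  have hlam : 0 ≤ lam := by nlinarith
  have hm₁ : lam ≤ scadMidArgmin lam gam z := by
    rw [scadMidArgmin, le_div_iff₀ (by linarith)]; nlinarith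
  have hm₂ : scadMidArgmin lam gam z ≤ gam * lam := by
    rw [scadMidArgmin, div_le_iff₀ (by linarith)]; nlinarith
  rw [scadObjective_of_nonneg (hlam.trans hm₁), scad_eq_scadMid (by linarith) hlam hm₁ hm₂]
  calc _ ≤ 1 / 2 * (z - b) ^ 2 + scadMid lam gam b :=
        scadMid_quadratic_le hgam (by rw [sub_self, sq, zero_mul]; positivity)
    _ ≤ _ := scadMid_quadratic_le_scadObjective (by linarith) hb

lemma scadObjective_self_le (hgam : 2 < gam) (hlam : 0 ≤ lam) (hz : gam * lam < z)
    (hb : 0 ≤ b) : scadObjective lam gam z z ≤ scadObjective lam gam z b := by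
  have hgl : 0 ≤ gam * lam := mul_nonneg (by linarith) hlam
  rw [scadObjective_of_nonneg (by linarith), scad_of_mul_lt (by linarith) hlam hz, sub_self]
  rcases lt_or_ge (gam * lam) b with hbl | hbl
  · rw [scadObjective_of_nonneg hb, scad_of_mul_lt (by linarith) hlam hbl]
    nlinarith [sq_nonneg (z - b)]
  · have hm : gam * lam ≤ scadMidArgmin lam gam z := by
      rw [scadMidArgmin, le_div_iff₀ (by linarith)]; nlinarith
    calc _ ≤ 1 / 2 * (z - gam * lam) ^ 2 + (gam + 1) * lam ^ 2 / 2 := by nlinarith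
      _ = 1 / 2 * (z - gam * lam) ^ 2 + scadMid lam gam (gam * lam) := by
        rw [scadMid_mul_self (by linarith)]
      _ ≤ 1 / 2 * (z - b) ^ 2 + scadMid lam gam b := scadMid_quadratic_le hgam (by nlinarith)
      _ ≤ _ := scadMid_quadratic_le_scadObjective (by linarith) hb

end Objective

lemma scadThresh_neg (lam gam z : ℝ) : scadThresh lam gam (-z) = -scadThresh lam gam z := by
  simp only [scadThresh, abs_neg, Real.sign_neg]
  split_ifs <;> ring

lemma scadThresh_of_nonneg {lam gam z : ℝ} (hlam : 0 ≤ lam) (hz : 0 ≤ z) :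
    scadThresh lam gam z =
      if z ≤ 2 * lam then max (z - lam) 0
      else if z ≤ gam * lam then scadMidArgmin lam gam z else z := by
  have hsign : Real.sign z * max (z - lam) 0 = max (z - lam) 0 := by
    rcases hz.eq_or_lt with rfl | hpos
    · rw [max_eq_right (by linarith), mul_zero]
    · rw [Real.sign_of_pos hpos, one_mul]
  rw [scadThresh, abs_of_nonneg hz, hsign, scadMidArgmin]
  split_ifs <;> first | rfl | rw [Real.sign_of_pos (by linarith), one_mul]

lemma isMinOn_scadObjective_of_nonneg {lam gam z : ℝ} (hlam : 0 ≤ lam) (hgam : 2 < gam)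
    (hz : 0 ≤ z) : IsMinOn (scadObjective lam gam z) Set.univ (scadThresh lam gam z) := by
  intro b _
  suffices h : scadObjective lam gam z (scadThresh lam gam z) ≤ scadObjective lam gam z |b| from
    h.trans (scadObjective_abs_le hz b)
  rw [scadThresh_of_nonneg hlam hz]
  split_ifs with h₁ h₂
  · exact scadObjective_softThreshold_le hgam hlam h₁ (abs_nonneg b)
  · exact scadObjective_scadMidArgmin_le hgam (by linarith) h₂ (abs_nonneg b)
  · exact scadObjective_self_le hgam hlam (by linarith) (abs_nonneg b)

/-- **SCAD univariate thresholding rule.** For `λ > 0`, `γ > 2` and `z ∈ ℝ`, the function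
`β ↦ (1/2)(z − β)² + p_λ(|β|)` attains its global minimum over `ℝ` at
`β̂ = sign(z)(|z| − λ)₊` if `|z| ≤ 2λ`, `β̂ = ((γ−1)z − sign(z)γλ)/(γ−2)` if `2λ < |z| ≤ γλ`,
and `β̂ = z` if `|z| > γλ`. -/
theorem scad_thresholding (lam gam z : ℝ) (hlam : 0 < lam) (hgam : 2 < gam) :
    IsMinOn (fun beta : ℝ => (1 / 2) * (z - beta) ^ 2 + scad lam gam |beta|) Set.univ
      (scadThresh lam gam z) := by
  change IsMinOn (scadObjective lam gam z) Set.univ (scadThresh lam gam z)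
  rcases le_total 0 z with hz | hz
  · exact isMinOn_scadObjective_of_nonneg hlam.le hgam hz
  · intro b _
    calc scadObjective lam gam z (scadThresh lam gam z)
        = scadObjective lam gam (-z) (scadThresh lam gam (-z)) := by
          rw [scadThresh_neg, scadObjective_neg]
      _ ≤ scadObjective lam gam (-z) (-b) :=
          isMinOn_scadObjective_of_nonneg hlam.le hgam (neg_nonneg.mpr hz) (Set.mem_univ _)
      _ = scadObjective lam gam z b := scadObjective_neg lam gam z b
end
end

section
/- (Weighted SCAD coordinate update) Let λ > 0, γ > 2, z ∈ ℝ, and v > 1/(γ−1). The function β ↦ (v/2)β² − zβ + p_λ(|β|) attains its global minimum over ℝ at β̂ given by: β̂ = S(z, λ)/v if |z| ≤ λ(v+1); β̂ = S(z, γλ/(γ−1)) / (v − 1/(γ−1)) if λ(v+1) < |z| ≤ vγλ; and β̂ = z/v if |z| > vγλ, where S(z, λ) = sign(z)(|z| − λ)₊ is the soft-thresholding operator. -/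
noncomputable section

open Filter MeasureTheory ProbabilityTheory Matrix
open scoped BigOperators ENNReal

/-- The soft-thresholding operator `S(z, λ) = sign(z)(|z| − λ)₊`. -/
def softThresh (z lam : ℝ) : ℝ := Real.sign z * max (|z| - lam) 0

/-- The weighted SCAD coordinate update rule. -/
def scadCoordUpdate (lam gam v z : ℝ) : ℝ :=
  if |z| ≤ lam * (v + 1) then softThresh z lam / v
  else if |z| ≤ v * gam * lam then softThresh z (gam * lam / (gam - 1)) / (v - 1 / (gam - 1))
  else z / v

/-! The function `q(b) = p_λ(b) + b² / (2(γ − 1))` is convex on `[0, ∞)`: its derivative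
`p'_λ(b) + b / (γ − 1)` is nondecreasing because the SCAD penalty bends down with curvature
exactly `1 / (γ − 1)` on `(λ, γλ]`. Hence for `v ≥ 1 / (γ − 1)` the objective
`(v/2) b² − w b + p_λ(b)` is convex on the half-line, and a point satisfying the first-order
(Karush–Kuhn–Tucker) conditions there is a global minimiser; the three branches of the update
are exactly the solutions of these conditions for `w ≥ 0`. The general case reduces to `z ≥ 0`
and `β ≥ 0`, since the objective is invariant under `(z, β) ↦ (−z, −β)` and, for `z ≥ 0`,
does not increase when `β` is replaced by `|β|`. -/

section

variable {lam gam t : ℝ}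

lemma scad_of_mid (ht : 0 ≤ t) (h₁ : lam < t) (h₂ : t ≤ gam * lam) :
    scad lam gam t = -((t ^ 2 - 2 * gam * lam * t + lam ^ 2) / (2 * (gam - 1))) := by
  simp [scad, abs_of_nonneg ht, not_le.2 h₁, h₂]

lemma scad_of_gt (ht : 0 ≤ t) (h₁ : lam < t) (h₂ : gam * lam < t) :
    scad lam gam t = (gam + 1) * lam ^ 2 / 2 := by
  simp [scad, abs_of_nonneg ht, not_le.2 h₁, not_le.2 h₂]

lemma scadDeriv_of_le (h : t ≤ lam) : scadDeriv lam gam t = lam := by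
  simp [scadDeriv, h, not_lt.2 h]

lemma scadDeriv_of_mid (hlam : 0 < lam) (hgam : 1 < gam) (h₁ : lam < t) (h₂ : t ≤ gam * lam) :
    scadDeriv lam gam t = (gam * lam - t) / (gam - 1) := by
  have : gam - 1 ≠ 0 := by linarith
  simp only [scadDeriv, if_neg (not_le.2 h₁), if_pos h₁, max_eq_left (sub_nonneg.2 h₂)]
  field_simp
  ring

lemma scadDeriv_of_gt (h₁ : lam < t) (h₂ : gam * lam < t) : scadDeriv lam gam t = 0 := by
  simp [scadDeriv, not_le.2 h₁, h₁, max_eq_right (sub_nonpos.2 h₂.le)]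

end

/-- The tangent-line inequality for the convex function `p_λ(b) + b² / (2(γ − 1))` on `[0, ∞)`. -/
lemma scad_tangent_le {lam gam u a : ℝ} (hlam : 0 < lam) (hgam : 1 < gam) (hu : 0 ≤ u)
    (ha : 0 ≤ a) :
    scad lam gam u + scadDeriv lam gam u * (a - u) - (a - u) ^ 2 / (2 * (gam - 1)) ≤
      scad lam gam a := by
  have hc : 0 < gam - 1 := by linarith
  have hlg : lam < gam * lam := by nlinarith
  rw [sub_le_iff_le_add, ← sub_le_iff_le_add', le_div_iff₀ (by positivity)]
  rcases le_or_gt u lam with hu₁ | hu₁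
  · rw [scad_of_le hu hu₁, scadDeriv_of_le hu₁]
    rcases le_or_gt a lam with ha₁ | ha₁
    · rw [scad_of_le ha ha₁]; nlinarith
    rcases le_or_gt a (gam * lam) with ha₂ | ha₂
    · rw [scad_of_mid ha ha₁ ha₂]; field_simp; nlinarith
    · rw [scad_of_gt ha ha₁ ha₂]; nlinarith
  rcases le_or_gt u (gam * lam) with hu₂ | hu₂
  · rw [scad_of_mid hu hu₁ hu₂, scadDeriv_of_mid hlam hgam hu₁ hu₂]
    rcases le_or_gt a lam with ha₁ | ha₁
    · rw [scad_of_le ha ha₁]; field_simp; nlinarith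
    rcases le_or_gt a (gam * lam) with ha₂ | ha₂
    · rw [scad_of_mid ha ha₁ ha₂]; field_simp; nlinarith
    · rw [scad_of_gt ha ha₁ ha₂]; field_simp; nlinarith
  · rw [scad_of_gt hu hu₁ hu₂, scadDeriv_of_gt hu₁ hu₂]
    rcases le_or_gt a lam with ha₁ | ha₁
    · rw [scad_of_le ha ha₁]; nlinarith
    rcases le_or_gt a (gam * lam) with ha₂ | ha₂
    · rw [scad_of_mid ha ha₁ ha₂]; field_simp; nlinarith
    · rw [scad_of_gt ha ha₁ ha₂]; nlinarith

lemma scad_objective_le_of_kkt {lam gam v w u a : ℝ} (hlam : 0 < lam) (hgam : 1 < gam)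
    (hv : 1 / (gam - 1) ≤ v) (hu : 0 ≤ u) (ha : 0 ≤ a)
    (hkkt : v * u - w + scadDeriv lam gam u = 0 ∨ u = 0 ∧ w ≤ lam) :
    v / 2 * u ^ 2 - w * u + scad lam gam u ≤ v / 2 * a ^ 2 - w * a + scad lam gam a := by
  have hsub : 0 ≤ (v * u - w + scadDeriv lam gam u) * (a - u) := by
    rcases hkkt with h | ⟨rfl, hw⟩
    · simp [h]
    · rw [scadDeriv_of_le hlam.le]
      nlinarith
  have htan := scad_tangent_le (gam := gam) hlam hgam hu ha
  have hcurv : (a - u) ^ 2 / (2 * (gam - 1)) ≤ v / 2 * (a - u) ^ 2 := by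
    rw [div_le_iff₀ (by linarith)]
    nlinarith [(div_le_iff₀ (sub_pos.2 hgam)).mp hv, sq_nonneg (a - u)]
  linarith

lemma softThresh_of_nonneg {z t : ℝ} (hz : 0 ≤ z) (ht : 0 ≤ t) :
    softThresh z t = max (z - t) 0 := by
  rcases hz.eq_or_lt with rfl | hz
  · simp [softThresh, ht]
  · simp [softThresh, Real.sign_of_pos hz, abs_of_pos hz]

lemma scadCoordUpdate_of_mid {lam gam v w : ℝ} (hlam : 0 < lam) (hgam : 1 < gam) (hw : 0 ≤ w)
    (h₁ : lam * (v + 1) < w) (h₂ : w ≤ v * gam * lam) :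
    scadCoordUpdate lam gam v w = ((gam - 1) * w - gam * lam) / (v * (gam - 1) - 1) := by
  have hc : 0 < gam - 1 := by linarith
  have hs : 0 < v * (gam - 1) - 1 := by nlinarith
  rw [scadCoordUpdate, abs_of_nonneg hw, if_neg (not_le.2 h₁), if_pos h₂,
    softThresh_of_nonneg hw (by positivity), max_eq_left]
  · field_simp
  · rw [sub_nonneg, div_le_iff₀ hc]
    nlinarith

lemma scadCoordUpdate_kkt {lam gam v w : ℝ} (hlam : 0 < lam) (hgam : 1 < gam)
    (hv : 1 / (gam - 1) < v) (hw : 0 ≤ w) :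
    let u := scadCoordUpdate lam gam v w
    0 ≤ u ∧ (v * u - w + scadDeriv lam gam u = 0 ∨ u = 0 ∧ w ≤ lam) := by
  have hc : 0 < gam - 1 := by linarith
  have hs : 0 < v * (gam - 1) - 1 := by rw [div_lt_iff₀ hc] at hv; linarith
  have hv0 : 0 < v := by nlinarith
  by_cases h₁ : w ≤ lam * (v + 1)
  · simp only [scadCoordUpdate, abs_of_nonneg hw, if_pos h₁, softThresh_of_nonneg hw hlam.le]
    rcases le_or_gt w lam with hwl | hwl
    · simp [hwl]
    rw [max_eq_left (by linarith)]
    have hu : (w - lam) / v ≤ lam := by rw [div_le_iff₀ hv0]; linarith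
    refine ⟨by positivity, Or.inl ?_⟩
    rw [scadDeriv_of_le hu]
    field_simp
    ring
  by_cases h₂ : w ≤ v * gam * lam
  · rw [scadCoordUpdate_of_mid hlam hgam hw (not_le.1 h₁) h₂]
    have hu₁ : lam < ((gam - 1) * w - gam * lam) / (v * (gam - 1) - 1) := by
      rw [lt_div_iff₀ hs]; nlinarith
    have hu₂ : ((gam - 1) * w - gam * lam) / (v * (gam - 1) - 1) ≤ gam * lam := by
      rw [div_le_iff₀ hs]; nlinarith
    refine ⟨by linarith, Or.inl ?_⟩
    rw [scadDeriv_of_mid hlam hgam hu₁ hu₂]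
    field_simp
    ring
  · simp only [scadCoordUpdate, abs_of_nonneg hw, if_neg h₁, if_neg h₂]
    have hu : gam * lam < w / v := by rw [lt_div_iff₀ hv0]; linarith
    refine ⟨by positivity, Or.inl ?_⟩
    rw [scadDeriv_of_gt (by nlinarith) hu]
    field_simp
    ring

lemma scadCoordUpdate_neg (lam gam v z : ℝ) :
    scadCoordUpdate lam gam v (-z) = -scadCoordUpdate lam gam v z := by
  simp only [scadCoordUpdate, softThresh, abs_neg, Real.sign_neg]
  split_ifs <;> ring

/-- **Weighted SCAD coordinate update.** For `λ > 0`, `γ > 2`, `z ∈ ℝ` and `v > 1/(γ−1)`, the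
function `β ↦ (v/2)β² − zβ + p_λ(|β|)` attains its global minimum over `ℝ` at
`β̂ = S(z, λ)/v` if `|z| ≤ λ(v+1)`, `β̂ = S(z, γλ/(γ−1))/(v − 1/(γ−1))` if
`λ(v+1) < |z| ≤ vγλ`, and `β̂ = z/v` if `|z| > vγλ`. -/
theorem scad_coord_update (lam gam z v : ℝ) (hlam : 0 < lam) (hgam : 2 < gam)
    (hv : 1 / (gam - 1) < v) :
    IsMinOn (fun beta : ℝ => (v / 2) * beta ^ 2 - z * beta + scad lam gam |beta|) Set.univ
      (scadCoordUpdate lam gam v z) := by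
  wlog hz : 0 ≤ z generalizing z
  · refine isMinOn_univ_iff.2 fun β => ?_
    have h := isMinOn_univ_iff.1 (this (-z) (by linarith)) (-β)
    simp only [scadCoordUpdate_neg, abs_neg, neg_sq] at h
    linarith
  obtain ⟨hu, hkkt⟩ := scadCoordUpdate_kkt hlam (by linarith) hv hz
  refine isMinOn_univ_iff.2 fun β => ?_
  calc _ = v / 2 * _ ^ 2 - z * _ + scad lam gam _ := by rw [abs_of_nonneg hu]
    _ ≤ v / 2 * |β| ^ 2 - z * |β| + scad lam gam |β| :=
      scad_objective_le_of_kkt hlam (by linarith) hv.le hu (abs_nonneg β) hkkt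
    _ ≤ _ := by
      rw [sq_abs]
      linarith [mul_le_mul_of_nonneg_left (le_abs_self β) hz]
end
end
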